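/- Let φ : ℝ^d → ℝ^d be C^∞ with all first-order partial derivatives bounded together with their derivatives, and suppose σ(φ)(x) = ∇φ(x)∇φ(x)^T is invertible with inverse γ(φ)(x). Then for all f, g smooth with g compactly supported, ∫ (∂_i f)(φ(x)) g(x) dx = ∫ f(φ(x)) H_i(φ,g)(x) dx, where H_i(φ,g) = −Σ_{k=1}^d ∂_k( g Σ_{j=1}^d γ^{i,j}(φ) ∂_k φ^j ). -/

import Mathlib

open MeasureTheory

/-- Jacobian matrix of φ : ℝ^d → ℝ^d, entries (∇φ)_{i,j} = ∂_j φ^i. -/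
noncomputable def jacobian {d : ℕ} (φ : EuclideanSpace ℝ (Fin d) → EuclideanSpace ℝ (Fin d))
    (x : EuclideanSpace ℝ (Fin d)) : Matrix (Fin d) (Fin d) ℝ :=
  fun i j => fderiv ℝ φ x (EuclideanSpace.single j 1) i

/-- σ(φ)(x) = ∇φ(x) ∇φ(x)^T. -/
noncomputable def sigmaMat {d : ℕ} (φ : EuclideanSpace ℝ (Fin d) → EuclideanSpace ℝ (Fin d))
    (x : EuclideanSpace ℝ (Fin d)) : Matrix (Fin d) (Fin d) ℝ :=
  jacobian φ x * (jacobian φ x).transpose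

/-- H_i(φ,g) = −Σ_k ∂_k ( g Σ_j γ^{i,j}(φ) ∂_k φ^j ), with γ(φ) = σ(φ)⁻¹. -/
noncomputable def Hweight {d : ℕ} (φ : EuclideanSpace ℝ (Fin d) → EuclideanSpace ℝ (Fin d))
    (i : Fin d) (g : EuclideanSpace ℝ (Fin d) → ℝ) (x : EuclideanSpace ℝ (Fin d)) : ℝ :=
  -∑ k : Fin d, fderiv ℝ
      (fun y => g y * ∑ j : Fin d,
        (sigmaMat φ y)⁻¹ i j * fderiv ℝ φ y (EuclideanSpace.single k 1) j)
      x (EuclideanSpace.single k 1)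

/- Auxiliary lemmas -/

/-- A continuous linear functional on Euclidean space is determined by its values on the
standard basis. -/
lemma clm_eval_sum {d : ℕ} (L : EuclideanSpace ℝ (Fin d) →L[ℝ] ℝ)
    (v : EuclideanSpace ℝ (Fin d)) :
    L v = ∑ l : Fin d, v l * L (EuclideanSpace.single l 1) := by
  have hv : v = ∑ l : Fin d, v l • EuclideanSpace.single l (1 : ℝ) := by
    ext m
    rw [show (∑ l : Fin d, v l • EuclideanSpace.single l (1 : ℝ)) m
        = ∑ l : Fin d, (v l • EuclideanSpace.single l (1 : ℝ)) m from by
      rw [WithLp.ofLp_sum]; exact Finset.sum_apply m Finset.univ _]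
    simp [EuclideanSpace.single_apply]
  conv_lhs => rw [hv]
  rw [map_sum]
  simp [smul_eq_mul]

lemma contDiff_jac_entry {d : ℕ} {φ : EuclideanSpace ℝ (Fin d) → EuclideanSpace ℝ (Fin d)}
    (hφ : ContDiff ℝ (⊤ : ℕ∞) φ) (k j : Fin d) :
    ContDiff ℝ (⊤ : ℕ∞) fun y => fderiv ℝ φ y (EuclideanSpace.single k 1) j := by
  have h1 : ContDiff ℝ (⊤ : ℕ∞) (fderiv ℝ φ) := hφ.fderiv_right (by simp)
  exact (EuclideanSpace.proj j).contDiff.comp (h1.clm_apply contDiff_const)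

lemma contDiff_matrix_det {d : ℕ} {M : EuclideanSpace ℝ (Fin d) → Matrix (Fin d) (Fin d) ℝ}
    (h : ∀ i j, ContDiff ℝ (⊤ : ℕ∞) fun y => M y i j) :
    ContDiff ℝ (⊤ : ℕ∞) fun y => (M y).det := by
  simp only [Matrix.det_apply']
  exact ContDiff.sum fun σ _ => contDiff_const.mul (contDiff_prod fun l _ => h _ _)

lemma contDiff_sigma_entry {d : ℕ} {φ : EuclideanSpace ℝ (Fin d) → EuclideanSpace ℝ (Fin d)}
    (hφ : ContDiff ℝ (⊤ : ℕ∞) φ) (i j : Fin d) :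
    ContDiff ℝ (⊤ : ℕ∞) fun y => sigmaMat φ y i j := by
  simp only [sigmaMat, Matrix.mul_apply, Matrix.transpose_apply, jacobian]
  exact ContDiff.sum fun k _ => (contDiff_jac_entry hφ k i).mul (contDiff_jac_entry hφ k j)

lemma contDiff_gamma_entry {d : ℕ} {φ : EuclideanSpace ℝ (Fin d) → EuclideanSpace ℝ (Fin d)}
    (hφ : ContDiff ℝ (⊤ : ℕ∞) φ) (hinv : ∀ x, IsUnit (sigmaMat φ x).det) (i j : Fin d) :
    ContDiff ℝ (⊤ : ℕ∞) fun y => (sigmaMat φ y)⁻¹ i j := by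
  have hdet : ContDiff ℝ (⊤ : ℕ∞) fun y => (sigmaMat φ y).det :=
    contDiff_matrix_det (contDiff_sigma_entry hφ)
  have hadj : ContDiff ℝ (⊤ : ℕ∞) fun y => (sigmaMat φ y).adjugate i j := by
    simp only [Matrix.adjugate_apply]
    apply contDiff_matrix_det
    intro a b
    simp only [Matrix.updateRow_apply]
    by_cases h : a = j
    · simp only [h, if_pos rfl]; exact contDiff_const
    · simp only [if_neg h]; exact contDiff_sigma_entry hφ a b
  have heq : (fun y => (sigmaMat φ y)⁻¹ i j)
      = fun y => (sigmaMat φ y).adjugate i j / (sigmaMat φ y).det := by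
    funext y
    rw [Matrix.inv_def, Matrix.smul_apply, smul_eq_mul, Ring.inverse_eq_inv']
    rw [div_eq_inv_mul]
  rw [heq]
  exact hadj.div hdet fun y => (isUnit_iff_ne_zero.mp (hinv y))

/-- integration by parts through a non-degenerate map φ:
∫ (∂_i f)(φ(x)) g(x) dx = ∫ f(φ(x)) H_i(φ,g)(x) dx. -/
theorem stmt8 (d : ℕ)
    (φ : EuclideanSpace ℝ (Fin d) → EuclideanSpace ℝ (Fin d))
    (hφ : ContDiff ℝ (⊤ : ℕ∞) φ)
    (hbd : ∀ n : ℕ, 1 ≤ n → ∃ B : ℝ, ∀ x, ‖iteratedFDeriv ℝ n φ x‖ ≤ B)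
    (hinv : ∀ x, IsUnit (sigmaMat φ x).det)
    (f g : EuclideanSpace ℝ (Fin d) → ℝ)
    (hf : ContDiff ℝ (⊤ : ℕ∞) f) (hg : ContDiff ℝ (⊤ : ℕ∞) g) (hgc : HasCompactSupport g)
    (i : Fin d) :
    (∫ x, fderiv ℝ f (φ x) (EuclideanSpace.single i 1) * g x) =
      ∫ x, f (φ x) * Hweight φ i g x := by
  classical
  set F : EuclideanSpace ℝ (Fin d) → ℝ := fun x => f (φ x) with hFdef
  set w : Fin d → EuclideanSpace ℝ (Fin d) → ℝ := fun k y =>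
    g y * ∑ j : Fin d, (sigmaMat φ y)⁻¹ i j * fderiv ℝ φ y (EuclideanSpace.single k 1) j
    with hwdef
  have hF : ContDiff ℝ (⊤ : ℕ∞) F := (hf.comp hφ).of_le (by simp)
  have hFdiff : Differentiable ℝ F := hF.differentiable (by simp)
  have hφdiff : Differentiable ℝ φ := hφ.differentiable (by simp)
  have hfdiff : Differentiable ℝ f := hf.differentiable (by simp)
  have hg' : ContDiff ℝ (⊤ : ℕ∞) g := hg.of_le (by simp)
  have hwsm : ∀ k, ContDiff ℝ (⊤ : ℕ∞) (w k) := fun k =>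
    hg'.mul (ContDiff.sum fun j _ =>
      (contDiff_gamma_entry hφ hinv i j).mul (contDiff_jac_entry hφ k j))
  have hwc : ∀ k, HasCompactSupport (w k) := fun k => hgc.mul_right
  -- pointwise identity
  have key : ∀ x, fderiv ℝ f (φ x) (EuclideanSpace.single i 1) * g x
      = ∑ k : Fin d, w k x * fderiv ℝ F x (EuclideanSpace.single k 1) := by
    intro x
    have hchain : fderiv ℝ F x = (fderiv ℝ f (φ x)).comp (fderiv ℝ φ x) :=
      fderiv_comp x (hfdiff (φ x)) (hφdiff x)
    set L := fderiv ℝ f (φ x) with hL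
    set J' : Fin d → Fin d → ℝ := fun k l => fderiv ℝ φ x (EuclideanSpace.single k 1) l
      with hJ'
    set c : Fin d → ℝ := fun j => (sigmaMat φ x)⁻¹ i j with hc
    have hFk : ∀ k, fderiv ℝ F x (EuclideanSpace.single k 1)
        = ∑ l : Fin d, J' k l * L (EuclideanSpace.single l 1) := by
      intro k
      rw [hchain]
      exact clm_eval_sum L _
    have hσ : ∀ a b, sigmaMat φ x a b = ∑ k : Fin d, J' k a * J' k b := by
      intro a b
      simp [sigmaMat, Matrix.mul_apply, Matrix.transpose_apply, jacobian, hJ']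
    have hunit : (sigmaMat φ x)⁻¹ * sigmaMat φ x = 1 :=
      Matrix.nonsing_inv_mul _ (hinv x)
    have hid : ∀ l, (∑ j : Fin d, c j * sigmaMat φ x j l)
        = (1 : Matrix (Fin d) (Fin d) ℝ) i l := by
      intro l
      rw [← hunit, Matrix.mul_apply]
    calc L (EuclideanSpace.single i 1) * g x
        = ∑ l : Fin d, (g x * L (EuclideanSpace.single l 1))
            * (1 : Matrix (Fin d) (Fin d) ℝ) i l := by
          simp [Matrix.one_apply, mul_ite, Finset.sum_ite_eq, mul_comm]
      _ = ∑ l : Fin d, (g x * L (EuclideanSpace.single l 1))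
            * ∑ j : Fin d, c j * sigmaMat φ x j l := by
          exact Finset.sum_congr rfl fun l _ => by rw [hid l]
      _ = ∑ j : Fin d, ∑ l : Fin d, (g x * L (EuclideanSpace.single l 1))
            * (c j * sigmaMat φ x j l) := by
          simp only [Finset.mul_sum]
          rw [Finset.sum_comm]
      _ = ∑ j : Fin d, ∑ l : Fin d, ∑ k : Fin d,
            (g x * L (EuclideanSpace.single l 1) * c j) * (J' k j * J' k l) := by
          refine Finset.sum_congr rfl fun j _ => Finset.sum_congr rfl fun l _ => ?_
          rw [hσ j l]
          simp only [Finset.mul_sum]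
          exact Finset.sum_congr rfl fun k _ => by ring
      _ = ∑ k : Fin d, ∑ j : Fin d, ∑ l : Fin d,
            (g x * L (EuclideanSpace.single l 1) * c j) * (J' k j * J' k l) := by
          rw [show (∑ j : Fin d, ∑ l : Fin d, ∑ k : Fin d,
              (g x * L (EuclideanSpace.single l 1) * c j) * (J' k j * J' k l))
            = ∑ j : Fin d, ∑ k : Fin d, ∑ l : Fin d,
              (g x * L (EuclideanSpace.single l 1) * c j) * (J' k j * J' k l) from
            Finset.sum_congr rfl fun j _ => Finset.sum_comm]
          rw [Finset.sum_comm]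
      _ = ∑ k : Fin d, w k x * fderiv ℝ F x (EuclideanSpace.single k 1) := by
          refine Finset.sum_congr rfl fun k _ => ?_
          rw [hFk k]
          show ∑ j : Fin d, ∑ l : Fin d,
              (g x * L (EuclideanSpace.single l 1) * c j) * (J' k j * J' k l)
            = (g x * ∑ j : Fin d, c j * J' k j)
                * ∑ l : Fin d, J' k l * L (EuclideanSpace.single l 1)
          simp only [Finset.mul_sum, Finset.sum_mul]
          rw [Finset.sum_comm]
          refine Finset.sum_congr rfl fun a _ => Finset.sum_congr rfl fun b _ => by ring
  -- continuity facts
  have hcontF' : ∀ v, Continuous fun x => fderiv ℝ F x v := fun v =>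
    ((hF.fderiv_right (m := (⊤:ℕ∞)) (by norm_cast)).clm_apply contDiff_const).continuous
  have hcontw : ∀ k, Continuous (w k) := fun k => (hwsm k).continuous
  have hcontw' : ∀ k v, Continuous fun x => fderiv ℝ (w k) x v := fun k v =>
    (((hwsm k).fderiv_right (m := (⊤:ℕ∞)) (by norm_cast)).clm_apply contDiff_const).continuous
  -- integrability facts
  have I1 : ∀ k : Fin d, Integrable
      (fun x => w k x * fderiv ℝ F x (EuclideanSpace.single k 1)) := fun k =>
    ((hcontw k).mul (hcontF' _)).integrable_of_hasCompactSupport ((hwc k).mul_right)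
  have I2 : ∀ k : Fin d, Integrable
      (fun x => fderiv ℝ (w k) x (EuclideanSpace.single k 1) * F x) := fun k =>
    ((hcontw' k _).mul hF.continuous).integrable_of_hasCompactSupport
      (((hwc k).fderiv_apply ℝ _).mul_right)
  have I3 : ∀ k : Fin d, Integrable (fun x => w k x * F x) := fun k =>
    ((hcontw k).mul hF.continuous).integrable_of_hasCompactSupport ((hwc k).mul_right)
  have hIBP : ∀ k : Fin d,
      (∫ x, w k x * fderiv ℝ F x (EuclideanSpace.single k 1))
        = -∫ x, fderiv ℝ (w k) x (EuclideanSpace.single k 1) * F x := fun k =>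
    integral_mul_fderiv_eq_neg_fderiv_mul_of_integrable (I2 k) (I1 k) (I3 k)
      (fun x _ => (hwsm k).differentiable (by simp) x) (fun x _ => hFdiff x)
  have h1 : (fun x => fderiv ℝ f (φ x) (EuclideanSpace.single i 1) * g x)
      = fun x => ∑ k : Fin d, w k x * fderiv ℝ F x (EuclideanSpace.single k 1) :=
    funext key
  have h3 : (fun x => f (φ x) * Hweight φ i g x)
      = fun x => ∑ k : Fin d,
          -(fderiv ℝ (w k) x (EuclideanSpace.single k 1) * F x) := by
    funext x
    have hH : Hweight φ i g x
        = -∑ k : Fin d, fderiv ℝ (w k) x (EuclideanSpace.single k 1) := rfl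
    rw [hH]
    rw [show f (φ x) = F x from rfl, mul_neg, Finset.mul_sum, ← Finset.sum_neg_distrib]
    exact Finset.sum_congr rfl fun k _ => by ring
  rw [h1, h3, integral_finset_sum _ (fun k _ => I1 k),
    integral_finset_sum (f := fun (k : Fin d) x =>
      -(fderiv ℝ (w k) x (EuclideanSpace.single k 1) * F x)) _ (fun k _ => (I2 k).neg)]
  refine Finset.sum_congr rfl fun k _ => ?_
  rw [hIBP k, integral_neg]
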